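/- Let w be a linear monomial weight function with induced valuation ω on nonzero polynomials, and let W be a (k+1)-dimensional space of degree-d forms. For any l ≤ k+1 linearly independent elements f₁,...,f_l ∈ W, one has Σ_{j=1}^{l} ω(f_j) ≤ ω(W), where ω(W) = min { Σ_{j=1}^{k+1} w(I_j) : Plücker coordinate M_{I₁...I_{k+1}} ≠ 0 } computed with respect to any basis of W extending f₁,...,f_l. -/

import Mathlib

/-!
A nonzero Plücker coordinate `M_{I₁…I_{k+1}}` of a basis `f` has a nonzero term in its
Leibniz expansion, i.e. a permutation `σ` with `f_{σ j}` having a nonzero coefficient at `I_j`;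
hence `ω(f_{σ j}) ≤ w(I_j)` and summing gives `Σ_j ω(f_j) ≤ Σ_j w(I_j)`. Such coordinates exist
because the coefficient columns of a linearly independent family span `K^{k+1}`, so `ω(W)` is
the infimum of a nonempty set bounded below by `Σ_j ω(f_j)`. With nonnegative weights every
`ω(f_j)` is nonnegative, so dropping terms only decreases the sum.
-/

open MvPolynomial

/-- The linear weight of an exponent vector: w(I) = Σ_l c_l · i_l. -/
def wt {n : ℕ} (c : Fin n → ℤ) (I : Fin n →₀ ℕ) : ℤ := ∑ l, c l * (I l : ℤ)

/-- ω(f) = min of w over exponent vectors of monomials with nonzero coefficient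
(junk value 0 for f = 0). -/
noncomputable def omega {K : Type*} [CommSemiring K] {n : ℕ} (c : Fin n → ℤ)
    (f : MvPolynomial (Fin n) K) : ℤ :=
  WithTop.untopD 0 ((f.support.image (wt c)).min)

/-- ω of a linear system given by generators f: the minimum of Σ_j w(I_j) over tuples of
exponent vectors whose Plücker coordinate (coefficient determinant) is nonzero. -/
noncomputable def omegaW {K : Type*} [CommRing K] {n : ℕ} {ι : Type*} [Fintype ι]
    [DecidableEq ι] (c : Fin n → ℤ) (f : ι → MvPolynomial (Fin n) K) : ℤ :=
  sInf { s : ℤ | ∃ I : ι → (Fin n →₀ ℕ),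
    (Matrix.of fun j i => MvPolynomial.coeff (I i) (f j)).det ≠ 0 ∧ s = ∑ j, wt c (I j) }

section Weight

variable {K : Type*} [CommSemiring K] {n : ℕ} {c : Fin n → ℤ}

lemma wt_nonneg (hc : ∀ i, 0 ≤ c i) (I : Fin n →₀ ℕ) : 0 ≤ wt c I :=
  Finset.sum_nonneg fun l _ => mul_nonneg (hc l) (Int.natCast_nonneg _)

lemma omega_nonneg (hc : ∀ i, 0 ≤ c i) (g : MvPolynomial (Fin n) K) : 0 ≤ omega c g := by
  unfold omega
  rcases (g.support.image (wt c)).eq_empty_or_nonempty with h | h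
  · simp [h]
  · rw [← Finset.coe_min' h, WithTop.untopD_coe]
    obtain ⟨I, -, hI⟩ := Finset.mem_image.mp (Finset.min'_mem _ h)
    exact hI ▸ wt_nonneg hc I

lemma omega_le_wt {g : MvPolynomial (Fin n) K} {I : Fin n →₀ ℕ} (h : coeff I g ≠ 0) :
    omega c g ≤ wt c I := by
  have hmem : wt c I ∈ g.support.image (wt c) :=
    Finset.mem_image_of_mem _ (mem_support_iff.mpr h)
  have hne : (g.support.image (wt c)).Nonempty := ⟨_, hmem⟩
  unfold omega
  rw [← Finset.coe_min' hne, WithTop.untopD_coe]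
  exact Finset.min'_le _ _ hmem

end Weight

lemma Matrix.exists_perm_apply_ne_zero_of_det_ne_zero {ι R : Type*} [Fintype ι]
    [DecidableEq ι] [CommRing R] {A : Matrix ι ι R} (h : A.det ≠ 0) :
    ∃ σ : Equiv.Perm ι, ∀ i, A (σ i) i ≠ 0 := by
  by_contra! hcon
  refine h (A.det_apply.trans (Finset.sum_eq_zero fun σ _ => ?_))
  obtain ⟨i, hi⟩ := hcon σ
  rw [Finset.prod_eq_zero (f := fun i => A (σ i) i) (Finset.mem_univ i) hi, smul_zero]

section CoefficientMinor

variable {K σ ι : Type*} [Field K] [Fintype ι] {f : ι → MvPolynomial σ K}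

lemma span_coeff_columns_eq_top (hf : LinearIndependent K f) :
    Submodule.span K (Set.range fun t : σ →₀ ℕ => fun j => coeff t (f j)) = ⊤ := by
  classical
  by_contra hspan
  obtain ⟨φ, hφ, hle⟩ :=
    Submodule.exists_le_ker_of_lt_top _ (lt_top_iff_ne_top.mpr hspan)
  have hcomb : ∑ j, φ (Pi.single j 1) • f j = 0 := by
    ext t
    have ht : φ (fun j => coeff t (f j)) = 0 := hle (Submodule.subset_span ⟨t, rfl⟩)
    rw [pi_eq_sum_univ' fun j => coeff t (f j), map_sum] at ht
    simpa [coeff_sum, mul_comm] using ht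
  have hzero := Fintype.linearIndependent_iff.mp hf _ hcomb
  exact hφ (LinearMap.pi_ext' fun j => LinearMap.ext_ring (by simpa using hzero j))

lemma exists_coeff_det_ne_zero [DecidableEq ι] (hf : LinearIndependent K f) :
    ∃ I : ι → (σ →₀ ℕ), (Matrix.of fun j i => coeff (I i) (f j)).det ≠ 0 := by
  set v : (σ →₀ ℕ) → ι → K := fun t j => coeff t (f j)
  obtain ⟨κ, a, -, hspan, hli⟩ := exists_linearIndependent' K v
  let b := Module.Basis.mk hli (by rw [hspan, span_coeff_columns_eq_top hf])
  let e := (Pi.basisFun K ι).indexEquiv b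
  refine ⟨a ∘ e, (Matrix.isUnit_iff_isUnit_det _).mp ?_ |>.ne_zero⟩
  exact Matrix.linearIndependent_cols_iff_isUnit.mp (hli.comp e e.injective)

end CoefficientMinor

section PluckerWeight

variable {ι : Type*} [Fintype ι] [DecidableEq ι] {n : ℕ} (c : Fin n → ℤ)

lemma sum_omega_le_sum_wt_of_det_ne_zero {K : Type*} [CommRing K]
    {f : ι → MvPolynomial (Fin n) K} {I : ι → (Fin n →₀ ℕ)}
    (h : (Matrix.of fun j i => coeff (I i) (f j)).det ≠ 0) :
    ∑ j, omega c (f j) ≤ ∑ i, wt c (I i) := by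
  obtain ⟨τ, hτ⟩ := Matrix.exists_perm_apply_ne_zero_of_det_ne_zero h
  calc ∑ j, omega c (f j) = ∑ i, omega c (f (τ i)) := (Equiv.sum_comp τ _).symm
    _ ≤ ∑ i, wt c (I i) := Finset.sum_le_sum fun i _ => omega_le_wt (hτ i)

lemma sum_omega_le_omegaW {K : Type*} [Field K] {f : ι → MvPolynomial (Fin n) K}
    (hf : LinearIndependent K f) :
    ∑ j, omega c (f j) ≤ omegaW c f := by
  obtain ⟨I, hI⟩ := exists_coeff_det_ne_zero hf
  refine le_csInf ⟨_, I, hI, rfl⟩ ?_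
  rintro _ ⟨J, hJ, rfl⟩
  exact sum_omega_le_sum_wt_of_det_ne_zero c hJ

end PluckerWeight

theorem stmt_18_general {K : Type*} [Field K] {n k l : ℕ} (hl : l ≤ k + 1)
    (c : Fin (n+1) → ℤ) (hc : ∀ i, 0 ≤ c i)
    (f : Fin (k+1) → MvPolynomial (Fin (n+1)) K)
    (hind : LinearIndependent K f) :
    ∑ j : Fin l, omega c (f (Fin.castLE hl j)) ≤ omegaW c f :=
  calc ∑ j : Fin l, omega c (f (Fin.castLE hl j))
      = ∑ j ∈ Finset.univ.map (Fin.castLEEmb hl), omega c (f j) :=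
        (Finset.sum_map Finset.univ (Fin.castLEEmb hl) fun j => omega c (f j)).symm
    _ ≤ ∑ j, omega c (f j) := Finset.sum_le_univ_sum_of_nonneg fun j => omega_nonneg hc (f j)
    _ ≤ omegaW c f := sum_omega_le_omegaW c hind

/-- For any l ≤ k+1 of the basis elements of a (k+1)-dimensional system of degree-d forms
(with nonnegative weights), Σ_{j≤l} ω(f_j) ≤ ω(W). -/
theorem stmt_18 {K : Type*} [Field K] {n d k l : ℕ} (hl : l ≤ k + 1)
    (c : Fin (n+1) → ℤ) (hc : ∀ i, 0 ≤ c i)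
    (f : Fin (k+1) → MvPolynomial (Fin (n+1)) K)
    (hind : LinearIndependent K f) (hhom : ∀ j, (f j).IsHomogeneous d) :
    ∑ j : Fin l, omega c (f (Fin.castLE hl j)) ≤ omegaW c f :=
  stmt_18_general hl c hc f hind
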